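/- Let ℓ ≥ 2 and ε > 0, and suppose x₁ < ⋯ < x_n is a normalized block sequence in Schlumprecht's space that is (1+ε/2)-equivalent to the ℓ₁ⁿ unit basis, with 4ℓ/n ≤ ε. Then z = (Σᵢxᵢ)/‖Σᵢxᵢ‖ satisfies ‖z‖_ℓ ≤ ε + 1/f(ℓ), where ‖z‖_ℓ = sup_{E₁<⋯<E_ℓ}(1/f(ℓ))Σⱼ‖Eⱼ(z)‖. -/

import Mathlib

open scoped Classical

noncomputable def f (l : ℕ) : ℝ := Real.logb 2 (l + 1)

/-- `E₁ < E₂ < ⋯` : the finite sets are successive. -/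
def Succ {l : ℕ} (E : Fin l → Finset ℕ) : Prop :=
  ∀ i j : Fin l, i < j → ∀ a ∈ E i, ∀ b ∈ E j, a < b

/-- Restriction `E(x)` of `x` to the finite set `E`. -/
noncomputable def restr (x : ℕ →₀ ℝ) (E : Finset ℕ) : ℕ →₀ ℝ :=
  x.filter (· ∈ E)

/-- The inductively defined norms `|·|_k`. -/
noncomputable def normK : ℕ → (ℕ →₀ ℝ) → ℝ
  | 0, x => ⨆ n, |x n|
  | k + 1, x => ⨆ l : ℕ, ⨆ E : Fin (l + 1) → Finset ℕ,
      if Succ E then (1 / f (l + 1)) * ∑ i, normK k (restr x (E i)) else 0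

/-- The Schlumprecht norm `‖x‖ = sup_k |x|_k`. -/
noncomputable def S (x : ℕ →₀ ℝ) : ℝ := ⨆ k, normK k x

/-- The equivalent norm `‖·‖_ℓ`. -/
noncomputable def Sl (l : ℕ) (x : ℕ →₀ ℝ) : ℝ :=
  ⨆ E : Fin l → Finset ℕ,
    if Succ E then (1 / f l) * ∑ i, S (restr x (E i)) else 0

/-- `x₁ < x₂ < ⋯ < x_n` : a block sequence (successive supports). -/
def IsBlock {n : ℕ} (x : Fin n → (ℕ →₀ ℝ)) : Prop :=
  ∀ i j : Fin n, i < j → ∀ a ∈ (x i).support, ∀ b ∈ (x j).support, a < b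

/-! ### Auxiliary lemmas -/

noncomputable def A (x : ℕ →₀ ℝ) : ℝ := ∑ m ∈ x.support, |x m|

lemma A_nonneg (x : ℕ →₀ ℝ) : 0 ≤ A x :=
  Finset.sum_nonneg fun _ _ => abs_nonneg _

lemma abs_apply_le_A (x : ℕ →₀ ℝ) (m : ℕ) : |x m| ≤ A x := by
  by_cases h : m ∈ x.support
  · exact Finset.single_le_sum (f := fun m => |x m|) (fun _ _ => abs_nonneg _) h
  · rw [Finsupp.notMem_support_iff.mp h]
    simpa using A_nonneg x

lemma restr_apply (x : ℕ →₀ ℝ) (E : Finset ℕ) (m : ℕ) :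
    restr x E m = if m ∈ E then x m else 0 := Finsupp.filter_apply _ _ _

lemma abs_restr_apply_le (x : ℕ →₀ ℝ) (E : Finset ℕ) (m : ℕ) :
    |restr x E m| ≤ |x m| := by
  rw [restr_apply]; split <;> simp

lemma restr_zero (E : Finset ℕ) : restr 0 E = 0 := by
  ext m; rw [restr_apply]; split <;> simp

lemma restr_add (a b : ℕ →₀ ℝ) (E : Finset ℕ) :
    restr (a + b) E = restr a E + restr b E := by
  ext m; simp only [Finsupp.add_apply, restr_apply]; split <;> simp

lemma restr_smul (c : ℝ) (x : ℕ →₀ ℝ) (E : Finset ℕ) :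
    restr (c • x) E = c • restr x E := by
  ext m; simp only [Finsupp.smul_apply, restr_apply]; split <;> simp

lemma restr_sum {ι : Type*} (s : Finset ι) (g : ι → (ℕ →₀ ℝ)) (E : Finset ℕ) :
    restr (∑ i ∈ s, g i) E = ∑ i ∈ s, restr (g i) E := by
  classical
  induction s using Finset.cons_induction with
  | empty => simpa using restr_zero E
  | cons a s ha ih => rw [Finset.sum_cons, Finset.sum_cons, restr_add, ih]

lemma restr_support (x : ℕ →₀ ℝ) : restr x x.support = x := by
  ext m; rw [restr_apply]
  split_ifs with h
  · rfl
  · exact (Finsupp.notMem_support_iff.1 h).symm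

/-! ### facts about f -/

lemma f_nonneg (l : ℕ) : 0 ≤ f l :=
  Real.logb_nonneg one_lt_two (by push_cast; linarith [Nat.cast_nonneg (α := ℝ) l])

lemma f_pos {l : ℕ} (hl : 1 ≤ l) : 0 < f l := by
  apply Real.logb_pos one_lt_two
  have : (1 : ℝ) ≤ l := by exact_mod_cast hl
  linarith

lemma one_le_f {l : ℕ} (hl : 1 ≤ l) : 1 ≤ f l := by
  have h2 : (2 : ℝ) ≤ (l : ℝ) + 1 := by
    have : (1 : ℝ) ≤ l := by exact_mod_cast hl
    linarith
  have := Real.logb_le_logb_of_le one_lt_two (by norm_num) h2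
  rwa [Real.logb_self_eq_one one_lt_two] at this

lemma f_one : f 1 = 1 := by
  unfold f
  norm_num

lemma f_ge_three_halves {l : ℕ} (hl : 2 ≤ l) : (3 / 2 : ℝ) ≤ f l := by
  have h3 : (3 : ℝ) ≤ (l : ℝ) + 1 := by
    have : (2 : ℝ) ≤ l := by exact_mod_cast hl
    linarith
  have h1 : Real.logb 2 3 ≤ f l := Real.logb_le_logb_of_le one_lt_two (by norm_num) h3
  have h2 : (3 / 2 : ℝ) ≤ Real.logb 2 3 := by
    rw [Real.le_logb_iff_rpow_le one_lt_two (by norm_num)]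
    have : ((2 : ℝ) ^ ((3:ℝ)/2)) ^ (2:ℕ) = 8 := by
      rw [← Real.rpow_natCast ((2:ℝ) ^ ((3:ℝ)/2)) 2, ← Real.rpow_mul (by norm_num)]
      norm_num
    nlinarith [Real.rpow_pos_of_pos (show (0:ℝ) < 2 by norm_num) ((3:ℝ)/2)]
  linarith

lemma Succ.disjoint {l : ℕ} {E : Fin l → Finset ℕ} (h : Succ E) {i j : Fin l}
    (hij : i ≠ j) : Disjoint (E i) (E j) := by
  rcases lt_or_gt_of_ne hij with h' | h'
  · exact Finset.disjoint_left.2 fun a hai haj => lt_irrefl a (h i j h' a hai a haj)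
  · exact Finset.disjoint_left.2 fun a hai haj => lt_irrefl a (h j i h' a haj a hai)

lemma A_restr_eq (x : ℕ →₀ ℝ) (E : Finset ℕ) :
    A (restr x E) = ∑ m ∈ x.support.filter (· ∈ E), |x m| := by
  unfold A
  rw [show (restr x E).support = x.support.filter (· ∈ E) from Finsupp.support_filter _ _]
  refine Finset.sum_congr rfl fun m hm => ?_
  rw [Finset.mem_filter] at hm
  rw [restr_apply, if_pos hm.2]

lemma sum_A_restr_le {l : ℕ} (x : ℕ →₀ ℝ) (E : Fin l → Finset ℕ) (hE : Succ E) :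
    ∑ i, A (restr x (E i)) ≤ A x := by
  simp only [A_restr_eq]
  have hdisj : ((Finset.univ : Finset (Fin l)) : Set (Fin l)).PairwiseDisjoint
      (fun i => x.support.filter (· ∈ E i)) := by
    intro i _ j _ hij
    refine Finset.disjoint_left.2 fun a ha hb => ?_
    exact Finset.disjoint_left.1 (hE.disjoint hij) (Finset.mem_filter.1 ha).2
      (Finset.mem_filter.1 hb).2
  rw [← Finset.sum_biUnion hdisj]
  refine Finset.sum_le_sum_of_subset_of_nonneg ?_ fun _ _ _ => abs_nonneg _
  intro m hm
  rcases Finset.mem_biUnion.1 hm with ⟨i, _, hi⟩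
  exact (Finset.mem_filter.1 hi).1

/-! ### normK basics -/

lemma normK_zero_def (x : ℕ →₀ ℝ) : normK 0 x = ⨆ n, |x n| := rfl

lemma normK_succ_def (k : ℕ) (x : ℕ →₀ ℝ) :
    normK (k + 1) x = ⨆ l : ℕ, ⨆ E : Fin (l + 1) → Finset ℕ,
      if Succ E then (1 / f (l + 1)) * ∑ i, normK k (restr x (E i)) else 0 := rfl

lemma normK_nonneg (k : ℕ) (x : ℕ →₀ ℝ) : 0 ≤ normK k x := by
  induction k generalizing x with
  | zero => exact Real.iSup_nonneg fun n => abs_nonneg _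
  | succ k ih =>
    refine Real.iSup_nonneg fun l => Real.iSup_nonneg fun E => ?_
    split_ifs
    · exact mul_nonneg (div_nonneg zero_le_one (f_nonneg _))
        (Finset.sum_nonneg fun i _ => ih _)
    · exact le_rfl

lemma normK_le_A (k : ℕ) (x : ℕ →₀ ℝ) : normK k x ≤ A x := by
  induction k generalizing x with
  | zero => exact Real.iSup_le (fun n => abs_apply_le_A x n) (A_nonneg x)
  | succ k ih =>
    refine Real.iSup_le (fun l => Real.iSup_le (fun E => ?_) (A_nonneg x)) (A_nonneg x)
    split_ifs with h
    · have h1 : ∑ i, normK k (restr x (E i)) ≤ A x :=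
        le_trans (Finset.sum_le_sum fun i _ => ih _) (sum_A_restr_le x E h)
      have hsum : 0 ≤ ∑ i, normK k (restr x (E i)) :=
        Finset.sum_nonneg fun i _ => normK_nonneg k _
      have hf1 : (1 : ℝ) / f (l + 1) ≤ 1 := by
        rw [div_le_one (f_pos (by omega))]
        exact one_le_f (by omega)
      calc (1 / f (l + 1)) * ∑ i, normK k (restr x (E i))
          ≤ ∑ i, normK k (restr x (E i)) := mul_le_of_le_one_left hsum hf1
        _ ≤ A x := h1
    · exact A_nonneg x

lemma le_normK_succ {k l : ℕ} {x : ℕ →₀ ℝ} (E : Fin (l + 1) → Finset ℕ) (hE : Succ E) :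
    (1 / f (l + 1)) * ∑ i, normK k (restr x (E i)) ≤ normK (k + 1) x := by
  have hb : ∀ (l' : ℕ) (E' : Fin (l' + 1) → Finset ℕ),
      (if Succ E' then (1 / f (l' + 1)) * ∑ i, normK k (restr x (E' i)) else 0) ≤ A x := by
    intro l' E'
    split_ifs with h
    · have h1 : ∑ i, normK k (restr x (E' i)) ≤ A x :=
        le_trans (Finset.sum_le_sum fun i _ => normK_le_A k _) (sum_A_restr_le x E' h)
      have hsum : 0 ≤ ∑ i, normK k (restr x (E' i)) :=
        Finset.sum_nonneg fun i _ => normK_nonneg k _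
      have hf1 : (1 : ℝ) / f (l' + 1) ≤ 1 := by
        rw [div_le_one (f_pos (by omega))]
        exact one_le_f (by omega)
      exact le_trans (mul_le_of_le_one_left hsum hf1) h1
    · exact A_nonneg x
  have h1 : (1 / f (l + 1)) * ∑ i, normK k (restr x (E i))
      ≤ ⨆ E' : Fin (l + 1) → Finset ℕ,
        if Succ E' then (1 / f (l + 1)) * ∑ i, normK k (restr x (E' i)) else 0 := by
    have := le_ciSup (f := fun E' : Fin (l + 1) → Finset ℕ =>
        if Succ E' then (1 / f (l + 1)) * ∑ i, normK k (restr x (E' i)) else 0)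
      ⟨A x, by rintro _ ⟨E', rfl⟩; exact hb l E'⟩ E
    rwa [if_pos hE] at this
  refine h1.trans ?_
  rw [normK_succ_def]
  exact le_ciSup (f := fun l' : ℕ => ⨆ E' : Fin (l' + 1) → Finset ℕ,
      if Succ E' then (1 / f (l' + 1)) * ∑ i, normK k (restr x (E' i)) else 0)
    ⟨A x, by rintro _ ⟨l', rfl⟩; exact Real.iSup_le (hb l') (A_nonneg x)⟩ l

lemma abs_le_normK_zero (x : ℕ →₀ ℝ) (n : ℕ) : |x n| ≤ normK 0 x := by
  rw [normK_zero_def]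
  exact le_ciSup ⟨A x, by rintro _ ⟨m, rfl⟩; exact abs_apply_le_A x m⟩ n

lemma normK_mono_abs (k : ℕ) (x y : ℕ →₀ ℝ) (h : ∀ m, |y m| ≤ |x m|) :
    normK k y ≤ normK k x := by
  induction k generalizing x y with
  | zero =>
    rw [normK_zero_def]
    exact Real.iSup_le (fun n => (h n).trans (abs_le_normK_zero x n)) (normK_nonneg 0 x)
  | succ k ih =>
    rw [normK_succ_def]
    refine Real.iSup_le (fun l => Real.iSup_le (fun E => ?_) (normK_nonneg _ x))
      (normK_nonneg _ x)
    split_ifs with hE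
    · refine le_trans ?_ (le_normK_succ E hE)
      refine mul_le_mul_of_nonneg_left (Finset.sum_le_sum fun i _ => ih _ _ fun m => ?_)
        (div_nonneg zero_le_one (f_nonneg _))
      rw [restr_apply, restr_apply]
      split_ifs
      · exact h m
      · simp
    · exact normK_nonneg _ x

lemma normK_le_succ (k : ℕ) (x : ℕ →₀ ℝ) : normK k x ≤ normK (k + 1) x := by
  have hSucc : Succ (fun _ : Fin 1 => x.support) := by
    intro i j hij
    exact absurd hij (by omega)
  have := le_normK_succ (k := k) (l := 0) (x := x) (fun _ => x.support) hSucc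
  simpa [f_one, restr_support] using this

lemma normK_monotone (x : ℕ →₀ ℝ) : Monotone fun k => normK k x :=
  monotone_nat_of_le_succ fun k => normK_le_succ k x

lemma normK_add_le (k : ℕ) (a b : ℕ →₀ ℝ) :
    normK k (a + b) ≤ normK k a + normK k b := by
  induction k generalizing a b with
  | zero =>
    rw [normK_zero_def]
    refine Real.iSup_le (fun n => ?_) (add_nonneg (normK_nonneg 0 a) (normK_nonneg 0 b))
    calc |(a + b) n| ≤ |a n| + |b n| := by rw [Finsupp.add_apply]; exact abs_add_le _ _
      _ ≤ normK 0 a + normK 0 b := add_le_add (abs_le_normK_zero a n) (abs_le_normK_zero b n)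
  | succ k ih =>
    rw [normK_succ_def]
    refine Real.iSup_le (fun l => Real.iSup_le (fun E => ?_)
        (add_nonneg (normK_nonneg _ a) (normK_nonneg _ b)))
      (add_nonneg (normK_nonneg _ a) (normK_nonneg _ b))
    split_ifs with hE
    · have h1 : ∀ i : Fin (l + 1), normK k (restr (a + b) (E i))
          ≤ normK k (restr a (E i)) + normK k (restr b (E i)) := by
        intro i; rw [restr_add]; exact ih _ _
      calc (1 / f (l + 1)) * ∑ i, normK k (restr (a + b) (E i))
          ≤ (1 / f (l + 1)) * ∑ i, (normK k (restr a (E i)) + normK k (restr b (E i))) :=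
            mul_le_mul_of_nonneg_left (Finset.sum_le_sum fun i _ => h1 i)
              (div_nonneg zero_le_one (f_nonneg _))
        _ = (1 / f (l + 1)) * ∑ i, normK k (restr a (E i))
            + (1 / f (l + 1)) * ∑ i, normK k (restr b (E i)) := by
            rw [Finset.sum_add_distrib]; ring
        _ ≤ normK (k + 1) a + normK (k + 1) b :=
            add_le_add (le_normK_succ E hE) (le_normK_succ E hE)
    · exact add_nonneg (normK_nonneg _ a) (normK_nonneg _ b)

lemma normK_smul (k : ℕ) (c : ℝ) (x : ℕ →₀ ℝ) :
    normK k (c • x) = |c| * normK k x := by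
  induction k generalizing x with
  | zero =>
    rw [normK_zero_def, normK_zero_def, Real.mul_iSup_of_nonneg (abs_nonneg c)]
    refine iSup_congr fun n => ?_
    rw [Finsupp.smul_apply, smul_eq_mul, abs_mul]
  | succ k ih =>
    rw [normK_succ_def, normK_succ_def, Real.mul_iSup_of_nonneg (abs_nonneg c)]
    refine iSup_congr fun l => ?_
    rw [Real.mul_iSup_of_nonneg (abs_nonneg c)]
    refine iSup_congr fun E => ?_
    split_ifs with hE
    · calc (1 / f (l + 1)) * ∑ i, normK k (restr (c • x) (E i))
          = (1 / f (l + 1)) * ∑ i, |c| * normK k (restr x (E i)) := by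
            congr 1
            refine Finset.sum_congr rfl fun i _ => ?_
            rw [restr_smul, ih]
        _ = |c| * ((1 / f (l + 1)) * ∑ i, normK k (restr x (E i))) := by
            rw [← Finset.mul_sum]; ring
    · simp

/-! ### S basics -/

lemma bdd_normK (x : ℕ →₀ ℝ) : BddAbove (Set.range fun k => normK k x) :=
  ⟨A x, by rintro _ ⟨k, rfl⟩; exact normK_le_A k x⟩

lemma normK_le_S (k : ℕ) (x : ℕ →₀ ℝ) : normK k x ≤ S x :=
  le_ciSup (bdd_normK x) k

lemma S_nonneg (x : ℕ →₀ ℝ) : 0 ≤ S x :=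
  Real.iSup_nonneg fun k => normK_nonneg k x

lemma S_le_A (x : ℕ →₀ ℝ) : S x ≤ A x :=
  Real.iSup_le (fun k => normK_le_A k x) (A_nonneg x)

lemma S_zero : S 0 = 0 := by
  refine le_antisymm ?_ (S_nonneg 0)
  have := S_le_A 0
  simpa [A] using this

lemma S_add_le (a b : ℕ →₀ ℝ) : S (a + b) ≤ S a + S b :=
  Real.iSup_le (fun k => (normK_add_le k a b).trans
    (add_le_add (normK_le_S k a) (normK_le_S k b)))
    (add_nonneg (S_nonneg a) (S_nonneg b))

lemma S_sum_le {ι : Type*} (s : Finset ι) (g : ι → (ℕ →₀ ℝ)) :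
    S (∑ i ∈ s, g i) ≤ ∑ i ∈ s, S (g i) := by
  classical
  induction s using Finset.cons_induction with
  | empty => simp [S_zero]
  | cons a s ha ih =>
    rw [Finset.sum_cons, Finset.sum_cons]
    exact (S_add_le _ _).trans (add_le_add le_rfl ih)

lemma S_smul (c : ℝ) (x : ℕ →₀ ℝ) : S (c • x) = |c| * S x := by
  unfold S
  rw [Real.mul_iSup_of_nonneg (abs_nonneg c)]
  exact iSup_congr fun k => normK_smul k c x

lemma S_mono_abs (x y : ℕ →₀ ℝ) (h : ∀ m, |y m| ≤ |x m|) : S y ≤ S x :=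
  Real.iSup_le (fun k => (normK_mono_abs k x y h).trans (normK_le_S k x)) (S_nonneg x)

lemma S_restr_le (x : ℕ →₀ ℝ) (E : Finset ℕ) : S (restr x E) ≤ S x :=
  S_mono_abs x _ fun m => abs_restr_apply_le x E m

/-! ### the two key estimates -/

lemma sum_S_restr_le {m : ℕ} (z : ℕ →₀ ℝ) (E : Fin (m + 1) → Finset ℕ) (hE : Succ E) :
    ∑ j, S (restr z (E j)) ≤ f (m + 1) * S z := by
  have hb : ∀ j : Fin (m + 1), BddAbove (Set.range fun k => normK k (restr z (E j))) :=
    fun j => bdd_normK _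
  have h1 : Filter.Tendsto (fun k => ∑ j, normK k (restr z (E j))) Filter.atTop
      (nhds (∑ j, S (restr z (E j)))) := by
    refine tendsto_finset_sum _ fun j _ => ?_
    exact tendsto_atTop_ciSup (normK_monotone _) (hb j)
  refine le_of_tendsto h1 (Filter.Eventually.of_forall fun k => ?_)
  have hf := f_pos (l := m + 1) (by omega)
  have h2 : (1 / f (m + 1)) * ∑ j, normK k (restr z (E j)) ≤ S z :=
    (le_normK_succ E hE).trans (normK_le_S (k + 1) z)
  calc ∑ j, normK k (restr z (E j))
      = f (m + 1) * ((1 / f (m + 1)) * ∑ j, normK k (restr z (E j))) := by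
        field_simp
    _ ≤ f (m + 1) * S z := mul_le_mul_of_nonneg_left h2 hf.le

lemma Sl_le_S {m : ℕ} (z : ℕ →₀ ℝ) : Sl (m + 1) z ≤ S z := by
  unfold Sl
  refine Real.iSup_le (fun E => ?_) (S_nonneg z)
  split_ifs with hE
  · have h1 := sum_S_restr_le z E hE
    have hf := f_pos (l := m + 1) (by omega)
    calc (1 / f (m + 1)) * ∑ j, S (restr z (E j))
        ≤ (1 / f (m + 1)) * (f (m + 1) * S z) :=
          mul_le_mul_of_nonneg_left h1 (by positivity)
      _ = S z := by field_simp
  · exact S_nonneg z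

theorem stmt19 (l : ℕ) (hl : 2 ≤ l) (eps : ℝ) (heps : 0 < eps)
    (n : ℕ) (x : Fin n → (ℕ →₀ ℝ)) (hb : IsBlock x)
    (hnorm : ∀ i, S (x i) = 1)
    (hequiv : ∀ a : Fin n → ℝ,
      (1 / (1 + eps / 2)) * ∑ i, |a i| ≤ S (∑ i, a i • x i) ∧
        S (∑ i, a i • x i) ≤ ∑ i, |a i|)
    (hn : 4 * (l : ℝ) / n ≤ eps) :
    Sl l ((S (∑ i, x i))⁻¹ • ∑ i, x i) ≤ eps + 1 / f l := by
  have hfl : 0 < f l := f_pos (by omega)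
  have hRHS : (0 : ℝ) ≤ eps + 1 / f l := by positivity
  by_cases hn0 : n = 0
  · subst hn0
    have hw : (∑ i : Fin 0, x i) = 0 := by simp
    rw [hw, smul_zero]
    unfold Sl
    refine Real.iSup_le (fun E => ?_) hRHS
    split_ifs
    · simp only [restr_zero, S_zero, Finset.sum_const, smul_zero, mul_zero]
      exact hRHS
    · exact hRHS
  -- main case
  have hn1 : 1 ≤ n := Nat.one_le_iff_ne_zero.2 hn0
  have hnR : (1 : ℝ) ≤ n := by exact_mod_cast hn1
  set w := ∑ i, x i with hw_def
  set s := S w with hs_def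
  have heps2 : (0 : ℝ) < 1 + eps / 2 := by linarith
  have hs_lb : (n : ℝ) / (1 + eps / 2) ≤ s := by
    have h := (hequiv fun _ => 1).1
    simp only [abs_one, Finset.sum_const, Finset.card_univ, Fintype.card_fin,
      nsmul_eq_mul, mul_one, one_smul] at h
    calc (n : ℝ) / (1 + eps / 2) = (1 / (1 + eps / 2)) * n := by ring
      _ ≤ s := h
  have hs_pos : 0 < s := lt_of_lt_of_le (by positivity) hs_lb
  have hsupp : ∀ i, ((x i).support).Nonempty := by
    intro i
    rw [Finsupp.support_nonempty_iff]
    intro h0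
    have := hnorm i
    rw [h0, S_zero] at this
    norm_num at this
  have h4l : 4 * (l : ℝ) ≤ eps * n := by
    have := (div_le_iff₀ (by positivity : (0:ℝ) < (n:ℝ))).1 hn
    linarith
  -- the counting estimate
  have key : ∀ E : Fin l → Finset ℕ, Succ E →
      ∑ j, S (restr w (E j)) ≤ (n : ℝ) + l := by
    intro E hE
    set M : Fin n → ℕ := fun i => ((x i).support).max' (hsupp i) with hM_def
    have hM_mem : ∀ i, M i ∈ (x i).support := fun i => Finset.max'_mem _ _
    have hM_le : ∀ i, ∀ a ∈ (x i).support, a ≤ M i := fun i a ha =>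
      Finset.le_max' _ a ha
    have h1 : ∀ j, S (restr w (E j)) ≤
        ∑ i, (if ((x i).support ∩ E j).Nonempty then (1 : ℝ) else 0) := by
      intro j
      have hsplit : restr w (E j) = ∑ i, restr (x i) (E j) := restr_sum _ _ _
      rw [hsplit]
      refine (S_sum_le _ _).trans (Finset.sum_le_sum fun i _ => ?_)
      by_cases hint : ((x i).support ∩ E j).Nonempty
      · rw [if_pos hint]
        exact (S_restr_le _ _).trans_eq (hnorm i)
      · rw [if_neg hint]
        have hzero : restr (x i) (E j) = 0 := by
          ext m
          rw [restr_apply]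
          split_ifs with hm
          · by_contra hne
            exact hint ⟨m, Finset.mem_inter.2 ⟨Finsupp.mem_support_iff.2 hne, hm⟩⟩
          · rfl
        rw [hzero, S_zero]
    set P : Finset (Fin l × Fin n) :=
      Finset.univ.filter (fun p => ((x p.2).support ∩ E p.1).Nonempty) with hP_def
    have h2 : ∑ j, S (restr w (E j)) ≤ (P.card : ℝ) := by
      calc ∑ j, S (restr w (E j))
          ≤ ∑ j, ∑ i, (if ((x i).support ∩ E j).Nonempty then (1 : ℝ) else 0) :=
            Finset.sum_le_sum fun j _ => h1 j
        _ = ∑ p : Fin l × Fin n,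
            (if ((x p.2).support ∩ E p.1).Nonempty then (1 : ℝ) else 0) := by
            rw [← Finset.sum_product']
            rfl
        _ = (P.card : ℝ) := by
            rw [hP_def, Finset.sum_boole]
    set P₁ : Finset (Fin l × Fin n) :=
      P.filter (fun p => ∀ b ∈ E p.1, b ≤ M p.2) with hP1_def
    set P₂ : Finset (Fin l × Fin n) :=
      P.filter (fun p => ¬ ∀ b ∈ E p.1, b ≤ M p.2) with hP2_def
    have hP12 : P = P₁ ∪ P₂ := (Finset.filter_union_filter_not_eq _ P).symm
    have hmemP : ∀ p ∈ P, ((x p.2).support ∩ E p.1).Nonempty := by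
      intro p hp
      exact (Finset.mem_filter.1 hp).2
    have hcard1 : P₁.card ≤ l := by
      have hinj : Set.InjOn Prod.fst (P₁ : Set (Fin l × Fin n)) := by
        intro p hp q hq hpq
        rw [Finset.mem_coe, hP1_def, Finset.mem_filter] at hp hq
        rcases hp with ⟨hpP, hpbd⟩
        rcases hq with ⟨hqP, hqbd⟩
        have hpP' := hmemP p hpP
        have hqP' := hmemP q hqP
        rcases lt_trichotomy p.2 q.2 with h' | h' | h'
        · exfalso
          obtain ⟨a, ha⟩ := hqP'
          rw [Finset.mem_inter] at ha
          have ha1 : a ≤ M p.2 := by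
            have := hpbd a
            rw [hpq] at this
            exact this ha.2
          have ha2 : M p.2 < a := hb p.2 q.2 h' _ (hM_mem p.2) a ha.1
          omega
        · exact Prod.ext hpq h'
        · exfalso
          obtain ⟨a, ha⟩ := hpP'
          rw [Finset.mem_inter] at ha
          have ha1 : a ≤ M q.2 := by
            have := hqbd a
            rw [← hpq] at this
            exact this ha.2
          have ha2 : M q.2 < a := hb q.2 p.2 h' _ (hM_mem q.2) a ha.1
          omega
      calc P₁.card = (P₁.image Prod.fst).card :=
            (Finset.card_image_of_injOn hinj).symm
        _ ≤ (Finset.univ : Finset (Fin l)).card := Finset.card_le_card (Finset.subset_univ _)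
        _ = l := by simp
    have hcard2 : P₂.card ≤ n := by
      have hinj : Set.InjOn Prod.snd (P₂ : Set (Fin l × Fin n)) := by
        intro p hp q hq hpq
        rw [Finset.mem_coe, hP2_def, Finset.mem_filter] at hp hq
        rcases hp with ⟨hpP, hpbd⟩
        rcases hq with ⟨hqP, hqbd⟩
        push_neg at hpbd hqbd
        have hpP' := hmemP p hpP
        have hqP' := hmemP q hqP
        rcases lt_trichotomy p.1 q.1 with h' | h' | h'
        · exfalso
          obtain ⟨b, hbE, hbM⟩ := hpbd
          obtain ⟨a, ha⟩ := hqP'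
          rw [Finset.mem_inter] at ha
          have ha1 : a ≤ M q.2 := hM_le q.2 a ha.1
          have hba : b < a := hE p.1 q.1 h' b hbE a ha.2
          rw [← hpq] at ha1
          omega
        · exact Prod.ext h' hpq
        · exfalso
          obtain ⟨b, hbE, hbM⟩ := hqbd
          obtain ⟨a, ha⟩ := hpP'
          rw [Finset.mem_inter] at ha
          have ha1 : a ≤ M p.2 := hM_le p.2 a ha.1
          have hba : b < a := hE q.1 p.1 h' b hbE a ha.2
          rw [hpq] at ha1
          omega
      calc P₂.card = (P₂.image Prod.snd).card :=
            (Finset.card_image_of_injOn hinj).symm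
        _ ≤ (Finset.univ : Finset (Fin n)).card := Finset.card_le_card (Finset.subset_univ _)
        _ = n := by simp
    have hcard : P.card ≤ l + n := by
      rw [hP12]
      calc (P₁ ∪ P₂).card ≤ P₁.card + P₂.card := Finset.card_union_le _ _
        _ ≤ l + n := Nat.add_le_add hcard1 hcard2
    refine h2.trans ?_
    have : (P.card : ℝ) ≤ (l : ℝ) + n := by exact_mod_cast hcard
    linarith
  -- now the two cases
  rcases le_or_gt eps 1 with he | he
  · -- small eps : use the counting estimate
    unfold Sl
    refine Real.iSup_le (fun E => ?_) hRHS
    split_ifs with hE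
    · have hk := key E hE
      have hrw : ∀ j : Fin l, S (restr (s⁻¹ • w) (E j)) = s⁻¹ * S (restr w (E j)) := by
        intro j
        rw [restr_smul, S_smul, abs_of_nonneg (inv_nonneg.2 hs_pos.le)]
      have hstep : (1 / f l) * ∑ j, S (restr (s⁻¹ • w) (E j))
          = (1 / f l) * (s⁻¹ * ∑ j, S (restr w (E j))) := by
        congr 1
        rw [Finset.mul_sum]
        exact Finset.sum_congr rfl fun j _ => hrw j
      rw [hstep]
      have hsum_nonneg : 0 ≤ ∑ j, S (restr w (E j)) :=
        Finset.sum_nonneg fun j _ => S_nonneg _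
      have h3 : s⁻¹ * ∑ j, S (restr w (E j)) ≤ s⁻¹ * ((n : ℝ) + l) :=
        mul_le_mul_of_nonneg_left hk (inv_nonneg.2 hs_pos.le)
      have hnpos : (0 : ℝ) < n := by positivity
      have h4 : s⁻¹ ≤ (1 + eps / 2) / n := by
        have := inv_anti₀ (show (0:ℝ) < (n : ℝ) / (1 + eps / 2) by positivity) hs_lb
        rwa [inv_div] at this
      have hfl32 : (3 / 2 : ℝ) ≤ f l := f_ge_three_halves hl
      have hmain : (1 + eps / 2) * ((n : ℝ) + l) ≤ n * (eps * f l + 1) := by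
        nlinarith [h4l, mul_nonneg (mul_nonneg heps.le (sub_nonneg.2 he)) hnpos.le,
          mul_nonneg (mul_nonneg (sub_nonneg.2 hfl32) heps.le) hnpos.le,
          mul_le_mul_of_nonneg_left h4l (le_of_lt heps)]
      have h5 : s⁻¹ * ((n : ℝ) + l) ≤ eps * f l + 1 := by
        have hnl : (0 : ℝ) ≤ (n : ℝ) + l := by positivity
        have h6 : s⁻¹ * ((n : ℝ) + l) ≤ ((1 + eps / 2) / n) * ((n : ℝ) + l) :=
          mul_le_mul_of_nonneg_right h4 hnl
        refine h6.trans ?_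
        rw [div_mul_eq_mul_div, div_le_iff₀ hnpos]
        nlinarith [hmain]
      calc (1 / f l) * (s⁻¹ * ∑ j, S (restr w (E j)))
          ≤ (1 / f l) * (s⁻¹ * ((n : ℝ) + l)) :=
            mul_le_mul_of_nonneg_left h3 (div_nonneg zero_le_one (f_nonneg _))
        _ ≤ (1 / f l) * (eps * f l + 1) :=
            mul_le_mul_of_nonneg_left h5 (div_nonneg zero_le_one (f_nonneg _))
        _ = eps + 1 / f l := by
            field_simp
    · exact hRHS
  · -- large eps : use Sl ≤ S
    obtain ⟨m, rfl⟩ : ∃ m, l = m + 1 := ⟨l - 1, by omega⟩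
    have h1 : Sl (m + 1) (s⁻¹ • w) ≤ S (s⁻¹ • w) := Sl_le_S _
    have h2 : S (s⁻¹ • w) = 1 := by
      rw [S_smul, abs_of_nonneg (inv_nonneg.2 hs_pos.le), ← hs_def,
        inv_mul_cancel₀ hs_pos.ne']
    rw [h2] at h1
    have h3 : (0 : ℝ) < 1 / f (m + 1) := by positivity
    linarith
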